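/- arXiv:1706.04768 — 3 statements merged into one kernel-verified Lean document; each statement's English description precedes it below -/
import Mathlib

section
/- Let F be an m×n real matrix and ξ(F) = det(I_n + FᵀF). Then for all 1 ≤ α ≤ m and 1 ≤ i ≤ n, ξ(F) Σ_{j=1}^{n} ((I_n + FᵀF)⁻¹)_{ij} F_{αj} = Σ_{A,I} (−1)^{O_A(α)+O_I(i)} [F]_{A,I} [F]_{A∖{α}, I∖{i}}, where the sum ranges over all A ⊆ {1,…,m} and I ⊆ {1,…,n} with |A| = |I| ≥ 1, α ∈ A and i ∈ I. -/
open Matrix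

/-- The minor of a real matrix `F` with respect to the row set `A` and column set `I`
(rows and columns taken in increasing order).  By convention `[F]_{∅,∅} = 1`. -/
noncomputable def mminor {m n : ℕ} (F : Matrix (Fin m) (Fin n) ℝ)
    (A : Finset (Fin m)) (I : Finset (Fin n)) : ℝ :=
  if h : A.card = I.card then
    Matrix.det (Matrix.of fun p q : Fin I.card =>
      F (A.orderEmbOfFin h p) (I.orderEmbOfFin rfl q))
  else 0

/-- `O_A(a)`: the number of elements of `A ∪ {a}` that are `≤ a`. -/
def ordIdx {N : ℕ} (A : Finset (Fin N)) (a : Fin N) : ℕ :=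
  ((insert a A).filter (fun x => x ≤ a)).card

/-!
By Cramer's rule and the symmetry of `M = 1 + FᵀF`, the left side is `det M'`, where `M'` is `M`
with its `i`-th row replaced by the row `F_α`. Now `M' = X F + D`, where `X` is `Fᵀ` with its
`i`-th row replaced by `e_α` and `D` is the identity with its `i`-th diagonal entry replaced by `0`.
Expanding `det (X F + D)` into principal minors of `X F` leaves only the index sets `I ∋ i`.
Cauchy–Binet writes each `det (X F)_{I,I}` as `Σ_A det X_{I,A} [F]_{A,I}`, and a Laplace expansion
along the row of `X_{I,A}` belonging to `i` gives `det X_{I,A} = (-1)^(O_A(α)+O_I(i)) [F]_{A∖α,I∖i}`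
if `α ∈ A`, and `0` otherwise.
-/

open Finset Function Equiv

theorem Finset.orderEmbOfFin_erase {α : Type*} [LinearOrder α] {S : Finset α} {t : ℕ}
    (h : S.card = t + 1) (c : Fin (t + 1)) (h' : (S.erase (S.orderEmbOfFin h c)).card = t) :
    ⇑((S.erase (S.orderEmbOfFin h c)).orderEmbOfFin h') = S.orderEmbOfFin h ∘ c.succAbove := by
  refine (orderEmbOfFin_unique h' (fun q => mem_erase.2 ⟨?_, orderEmbOfFin_mem S h _⟩)
    ((S.orderEmbOfFin h).strictMono.comp (Fin.strictMono_succAbove c))).symm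
  exact (S.orderEmbOfFin h).injective.ne (Fin.succAbove_ne c q)

/-- An injective `p : Fin k → α` is, uniquely, the increasing enumeration of its image composed
with a permutation. -/
theorem Finset.sum_eq_sum_sum_perm_orderEmbOfFin {α β : Type*} [Fintype α] [LinearOrder α]
    [AddCommMonoid β] {k : ℕ} (g : (Fin k → α) → β) (hg : ∀ p, ¬Injective p → g p = 0) :
    ∑ p, g p = ∑ A : Finset α,
      if h : A.card = k then ∑ σ : Perm (Fin k), g (A.orderEmbOfFin h ∘ σ) else 0 := by
  rw [← sum_fiberwise univ (fun p => univ.image p)]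
  refine sum_congr rfl fun A _ => ?_
  split_ifs with h
  · symm
    refine sum_bij (fun σ _ => A.orderEmbOfFin h ∘ σ) (fun σ _ => ?_) (fun σ _ τ _ hστ => ?_)
      (fun p hp => ?_) fun _ _ => rfl
    · rw [mem_filter, image_comp, image_univ_equiv, image_orderEmbOfFin_univ]
      exact ⟨mem_univ _, rfl⟩
    · exact Equiv.ext fun x => (A.orderEmbOfFin h).injective (congrFun hστ x)
    · have hpA : univ.image p = A := (mem_filter.1 hp).2
      have hmem : ∀ x, p x ∈ A := fun x => hpA ▸ mem_image_of_mem p (mem_univ x)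
      let τ : Fin k → Fin k := fun x => (A.orderIsoOfFin h).symm ⟨p x, hmem x⟩
      have hτ : Surjective τ := by
        intro y
        obtain ⟨x, -, hx⟩ := mem_image.1 (by rw [hpA]; exact orderEmbOfFin_mem A h y)
        exact ⟨x, (A.orderIsoOfFin h).symm_apply_eq.2 (Subtype.ext (by simp [hx]))⟩
      refine ⟨Equiv.ofBijective τ ⟨Finite.injective_iff_surjective.2 hτ, hτ⟩, mem_univ _, ?_⟩
      ext x
      change A.orderEmbOfFin h (τ x) = p x
      rw [← coe_orderIsoOfFin_apply, OrderIso.apply_symm_apply]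
  · refine sum_eq_zero fun p hp => hg p fun hinj => h ?_
    rw [← (mem_filter.1 hp).2, card_image_of_injective _ hinj, card_univ, Fintype.card_fin]

namespace Matrix

theorem submatrix_updateRow_of_injective {l m n o α : Type*} [DecidableEq l] [DecidableEq m]
    (A : Matrix m n α) {e : l → m} (he : Injective e) (c : o → n) (i : l) (v : n → α) :
    (A.updateRow (e i) v).submatrix e c = (A.submatrix e c).updateRow i (v ∘ c) := by
  ext p q
  by_cases hp : p = i
  · subst hp; simp
  · simp [hp, he.ne hp]

variable {R : Type*} [CommRing R]

theorem IsSymm.det_mul_sum_inv_mul_eq_det_updateRow {n : Type*} [Fintype n] [DecidableEq n]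
    {A : Matrix n n R} (hA : A.IsSymm) (hdet : IsUnit A.det) (b : n → R) (i : n) :
    A.det * ∑ j, A⁻¹ i j * b j = det (A.updateRow i b) := by
  calc A.det * ∑ j, A⁻¹ i j * b j = (A.det • A⁻¹ *ᵥ b) i := by
        simp [mulVec, dotProduct, mul_sum]
    _ = cramer A b i := by rw [det_smul_inv_mulVec_eq_cramer A b hdet]
    _ = det (A.updateRow i b) := by
        rw [cramer_apply, ← det_transpose, ← updateRow_transpose, hA.eq]

theorem det_add_diagonal_eq_sum_prod_mul_det_submatrix {n : Type*} [Fintype n] [DecidableEq n]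
    (B : Matrix n n R) (d : n → R) :
    det (B + diagonal d) =
      ∑ s : Finset n, (∏ k ∈ sᶜ, d k) * det (B.submatrix ((↑) : s → n) (↑)) := by
  have hrows : B + diagonal d = of (B.row + fun k => d k • row 1 k) := by
    ext k j
    change B k j + diagonal d k j = B k j + d k * (1 : Matrix n n R) k j
    by_cases hkj : k = j
    · subst hkj; simp
    · simp [hkj]
  rw [hrows]
  change detRowAlternating.toMultilinearMap (B.row + fun k => d k • row 1 k) = _
  rw [MultilinearMap.map_add_univ]
  refine sum_congr rfl fun s _ => ?_
  have hpiece : s.piecewise B.row (fun k => d k • row 1 k) =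
      sᶜ.piecewise (fun k => d k • s.piecewise B.row (row 1) k) (s.piecewise B.row (row 1)) := by
    ext k : 1
    by_cases hk : k ∈ s <;> simp [hk]
  rw [hpiece, MultilinearMap.map_piecewise_smul, smul_eq_mul]
  congr 1
  exact det_piecewise_one_eq_submatrix_det B s

theorem det_submatrix_coe_eq_det_submatrix_orderEmbOfFin {α : Type*} [LinearOrder α]
    (B : Matrix α α R) (s : Finset α) :
    det (B.submatrix ((↑) : s → α) (↑)) =
      det (B.submatrix (s.orderEmbOfFin rfl) (s.orderEmbOfFin rfl)) := by
  rw [← det_submatrix_equiv_self (s.orderIsoOfFin rfl).toEquiv]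
  rfl

theorem det_mul_eq_sum_prod_mul_det_submatrix {ι κ : Type*} [Fintype ι] [DecidableEq ι]
    [Fintype κ] (M : Matrix ι κ R) (N : Matrix κ ι R) :
    det (M * N) = ∑ p : ι → κ, (∏ x, M x (p x)) * det (N.submatrix p id) := by
  have hrows : M * N = of fun x => ∑ j, M x j • N j := by
    ext x y; simp [mul_apply]
  rw [hrows]
  change detRowAlternating.toMultilinearMap (fun x => ∑ j, M x j • N j) = _
  rw [MultilinearMap.map_sum]
  refine sum_congr rfl fun p _ => ?_
  rw [MultilinearMap.map_smul_univ, smul_eq_mul]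
  rfl

theorem det_mul_eq_sum_det_submatrix_mul_det_submatrix {α : Type*} [Fintype α] [LinearOrder α]
    {k : ℕ} (M : Matrix (Fin k) α R) (N : Matrix α (Fin k) R) :
    det (M * N) = ∑ A : Finset α, if h : A.card = k then
      det (M.submatrix id (A.orderEmbOfFin h)) * det (N.submatrix (A.orderEmbOfFin h) id)
      else 0 := by
  rw [det_mul_eq_sum_prod_mul_det_submatrix, sum_eq_sum_sum_perm_orderEmbOfFin]
  · refine sum_congr rfl fun A _ => dite_congr rfl (fun h => ?_) fun _ => rfl
    rw [← det_transpose (M.submatrix _ _), det_apply', sum_mul]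
    refine sum_congr rfl fun σ _ => ?_
    rw [show N.submatrix (A.orderEmbOfFin h ∘ σ) id =
        (N.submatrix (A.orderEmbOfFin h) id).submatrix σ id from rfl, det_permute]
    simp only [transpose_apply, submatrix_apply, id, Function.comp_apply]
    ring
  · intro p hp
    obtain ⟨x, y, hxy, hne⟩ : ∃ x y, p x = p y ∧ x ≠ y := by
      simpa [Injective] using hp
    rw [det_zero_of_row_eq hne (by ext; simp [hxy]), mul_zero]

theorem updateRow_one_add_transpose_mul_self {m n : Type*} [Fintype m] [DecidableEq m]
    [DecidableEq n] (F : Matrix m n R) (α : m) (i : n) :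
    (1 + Fᵀ * F).updateRow i (F α) =
      Fᵀ.updateRow i (Pi.single α 1) * F + diagonal (update 1 i 0) := by
  ext k j
  by_cases hk : k = i
  · subst hk; simp [mul_apply, Pi.single_apply, diagonal_apply]
  · by_cases hkj : k = j
    · subst hkj; simp [hk, mul_apply, add_comm]
    · simp [hk, hkj, mul_apply]

end Matrix

theorem ordIdx_orderEmbOfFin {N k : ℕ} {S : Finset (Fin N)} (h : S.card = k) (c : Fin k) :
    ordIdx S (S.orderEmbOfFin h c) = c + 1 := by
  rw [ordIdx, insert_eq_of_mem (orderEmbOfFin_mem S h c)]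
  set x := S.orderEmbOfFin h c with hx
  nth_rw 1 [← image_orderEmbOfFin_univ S h]
  rw [filter_image, card_image_of_injective _ (S.orderEmbOfFin h).injective, ← Fin.card_Iic]
  congr 1
  ext y
  simp [hx]

theorem mminor_eq_det_submatrix {m n k : ℕ} (F : Matrix (Fin m) (Fin n) ℝ) {A : Finset (Fin m)}
    {I : Finset (Fin n)} (hA : A.card = k) (hI : I.card = k) :
    mminor F A I = det (F.submatrix (A.orderEmbOfFin hA) (I.orderEmbOfFin hI)) := by
  subst hI
  rw [mminor, dif_pos hA]
  rfl

theorem det_submatrix_updateRow_transpose_single {m n k : ℕ} (F : Matrix (Fin m) (Fin n) ℝ)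
    (α : Fin m) {i : Fin n} {A : Finset (Fin m)} {I : Finset (Fin n)} (hA : A.card = k)
    (hI : I.card = k) (hi : i ∈ I) :
    det ((Fᵀ.updateRow i (Pi.single α 1)).submatrix (I.orderEmbOfFin hI) (A.orderEmbOfFin hA)) =
      if α ∈ A then (-1) ^ (ordIdx A α + ordIdx I i) * mminor F (A.erase α) (I.erase i)
      else 0 := by
  obtain ⟨r, rfl⟩ : ∃ r, I.orderEmbOfFin hI r = i := by
    rwa [← Set.mem_range, range_orderEmbOfFin]
  rw [submatrix_updateRow_of_injective _ (I.orderEmbOfFin hI).injective]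
  split_ifs with hα
  · obtain ⟨c, rfl⟩ : ∃ c, A.orderEmbOfFin hA c = α := by
      rwa [← Set.mem_range, range_orderEmbOfFin]
    obtain ⟨t, rfl⟩ : ∃ t, k = t + 1 := Nat.exists_eq_add_one.2 (Fin.pos r)
    have hsingle :
        Pi.single (A.orderEmbOfFin hA c) (1 : ℝ) ∘ A.orderEmbOfFin hA = Pi.single c 1 := by
      funext q; simp [Pi.single_apply]
    have hA' : (A.erase (A.orderEmbOfFin hA c)).card = t := by simp [hA]
    have hI' : (I.erase (I.orderEmbOfFin hI r)).card = t := by simp [hI]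
    rw [hsingle, ← transpose_submatrix, ← adjugate_apply, adjugate_fin_succ_eq_det_submatrix,
      ← transpose_submatrix, det_transpose, submatrix_submatrix, ← orderEmbOfFin_erase hA c hA',
      ← orderEmbOfFin_erase hI r hI', ← mminor_eq_det_submatrix, ordIdx_orderEmbOfFin,
      ordIdx_orderEmbOfFin]
    ring
  · refine det_eq_zero_of_row_eq_zero r fun q => ?_
    simp only [updateRow_self, Function.comp_apply]
    exact Pi.single_eq_of_ne (ne_of_mem_of_not_mem (orderEmbOfFin_mem A hA q) hα) _

theorem det_submatrix_updateRow_transpose_single_mul_self {m n : ℕ}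
    (F : Matrix (Fin m) (Fin n) ℝ) (α : Fin m) {i : Fin n} {I : Finset (Fin n)} (hi : i ∈ I) :
    det ((Fᵀ.updateRow i (Pi.single α 1) * F).submatrix ((↑) : I → Fin n) (↑)) =
      ∑ A : Finset (Fin m), if α ∈ A ∧ A.card = I.card then
        (-1 : ℝ) ^ (ordIdx A α + ordIdx I i) * mminor F A I * mminor F (A.erase α) (I.erase i)
      else 0 := by
  rw [det_submatrix_coe_eq_det_submatrix_orderEmbOfFin, submatrix_mul _ _ _ id _ bijective_id,
    det_mul_eq_sum_det_submatrix_mul_det_submatrix]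
  refine sum_congr rfl fun A _ => ?_
  simp only [submatrix_submatrix, Function.comp_id, Function.id_comp]
  by_cases hA : A.card = I.card
  · rw [dif_pos hA, det_submatrix_updateRow_transpose_single F α hA rfl hi,
      ← mminor_eq_det_submatrix F hA rfl]
    by_cases hα : α ∈ A <;> simp [hα, hA, mul_right_comm]
  · simp [hA]

/-- `ξ(F)·Σ_j ((I_n+FᵀF)⁻¹)_{ij} F_{αj} = Σ_{A,I : α∈A, i∈I} (−1)^{O_A(α)+O_I(i)}
[F]_{A,I}[F]_{A∖{α},I∖{i}}`. -/
theorem xi_prime_eq_sum_of_minors (m n : ℕ) (F : Matrix (Fin m) (Fin n) ℝ)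
    (α : Fin m) (i : Fin n) :
    (1 + Fᵀ * F).det * ∑ j, ((1 : Matrix (Fin n) (Fin n) ℝ) + Fᵀ * F)⁻¹ i j * F α j =
      ∑ A : Finset (Fin m), ∑ I : Finset (Fin n),
        if α ∈ A ∧ i ∈ I ∧ A.card = I.card then
          (-1 : ℝ) ^ (ordIdx A α + ordIdx I i) *
            mminor F A I * mminor F (A.erase α) (I.erase i)
        else 0 := by
  have hsymm : (1 + Fᵀ * F).IsSymm :=
    isSymm_one.add (by rw [IsSymm, transpose_mul, transpose_transpose])
  have hdet : IsUnit (1 + Fᵀ * F).det := by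
    refine (PosDef.det_pos (PosDef.one.add_posSemidef ?_)).ne'.isUnit
    simpa using posSemidef_conjTranspose_mul_self F
  rw [hsymm.det_mul_sum_inv_mul_eq_det_updateRow hdet, updateRow_one_add_transpose_mul_self,
    det_add_diagonal_eq_sum_prod_mul_det_submatrix, sum_comm]
  refine sum_congr rfl fun I _ => ?_
  by_cases hi : i ∈ I
  · simp only [prod_update_of_notMem (s := Iᶜ) (by simpa using hi), Pi.one_apply, prod_const_one,
      one_mul, det_submatrix_updateRow_transpose_single_mul_self F α hi]
    simp [hi]
  · rw [prod_update_of_mem (by simpa using hi), zero_mul]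
    simp [hi]
end

section
/- Let F be an m×n real matrix and ξ(F) = det(I_n + FᵀF). Then for all 1 ≤ i,j ≤ n, ξ(F) ((I_n + FᵀF)⁻¹)_{ij} = (1 + Σ_{A,I} ([F]_{A,I})²) δ_{ij} − Σ_{A,I : j ∈ I, i ∉ I∖{j}} (−1)^{O_I(j)+O_{I∖{j}}(i)} [F]_{A,(I∖{j})∪{i}} [F]_{A,I}, where both sums range over all A ⊆ {1,…,m} and I ⊆ {1,…,n} with |A| = |I| ≥ 1. -/
/-!
`ξ(F) (I + FᵀF)⁻¹` is the adjugate of `I + G`, `G = FᵀF`, and its `(i, j)` entry is the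
determinant of `I + G` with row `j` replaced by `eᵢ`. Every other row is a row of the identity
plus a row of `G`, so multilinearity expands this determinant over the sets `S` of rows taken
from `G`; each summand has unit rows outside `S ∪ {j}`. For `i = j` the summands are the
principal minors `G[S, S]` with `i ∉ S`. For `i ≠ j` only the sets with `i ∈ S ∌ j` survive,
and a cofactor expansion along the unit row `j` turns the summand into `-G[S, I]` with
`I = S - i + j`, the sign being `(-1)^(O_I(j) + O_{I∖{j}}(i))`. Finally Cauchy–Binet writes
every minor of `FᵀF` as `Σ_A [F]_{A,J} [F]_{A,I}`; the empty minor accounts for the constant `1`.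
-/

open Matrix

open Finset

section OrderEmbOfFin

variable {α : Type*} [LinearOrder α]

theorem card_filter_lt_orderEmbOfFin (K : Finset α) {t : ℕ}
    (h : K.card = t) (p : Fin t) : #{x ∈ K | x < K.orderEmbOfFin h p} = p := by
  set e := K.orderEmbOfFin h
  rw [← map_orderEmbOfFin_univ K h, filter_map, card_map]
  simp only [e, Function.comp_def, RelEmbedding.coe_toEmbedding, OrderEmbedding.lt_iff_lt]
  rw [filter_gt_eq_Iio, Fin.card_Iio]

theorem orderEmbOfFin_comp_succAbove (K : Finset α) {t : ℕ}
    (h : K.card = t + 1) (p : Fin (t + 1)) (h' : (K.erase (K.orderEmbOfFin h p)).card = t) :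
    K.orderEmbOfFin h ∘ p.succAbove = (K.erase (K.orderEmbOfFin h p)).orderEmbOfFin h' :=
  orderEmbOfFin_unique h'
    (fun q => mem_erase.2 ⟨fun hq => p.succAbove_ne q ((K.orderEmbOfFin h).injective hq),
      orderEmbOfFin_mem _ _ _⟩)
    ((K.orderEmbOfFin h).strictMono.comp p.strictMono_succAbove)

theorem exists_perm_orderEmbOfFin_comp_eq {k : ℕ} {r : Fin k → α} (hr : Function.Injective r)
    {A : Finset α} (hA : A.card = k) (himg : univ.image r = A) :
    ∃ σ : Equiv.Perm (Fin k), A.orderEmbOfFin hA ∘ σ = r := by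
  have hmem (a : Fin k) : r a ∈ Set.range (A.orderEmbOfFin hA) := by
    simp [← himg]
  choose g hg using hmem
  have hg_inj : Function.Injective g := fun a b hab => hr (by rw [← hg a, ← hg b, hab])
  exact ⟨Equiv.ofBijective g (Finite.injective_iff_bijective.1 hg_inj), funext hg⟩

end OrderEmbOfFin

section Determinant

variable {R : Type*} [CommRing R]

theorem det_add_eq_sum_det_piecewise {n : Type*} [Fintype n] [DecidableEq n]
    (A B : Matrix n n R) : (A + B).det = ∑ S : Finset n, (of (S.piecewise A.row B.row)).det :=
  (detRowAlternating : (n → R) [⋀^n]→ₗ[R] R).toMultilinearMap.map_add_univ A.row B.row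

theorem Matrix.det_mul_inv_apply {n : Type*} [Fintype n] [DecidableEq n]
    {A : Matrix n n R} (h : IsUnit A.det) (i j : n) : A.det * A⁻¹ i j = A.adjugate i j := by
  rw [inv_def, smul_apply, smul_eq_mul, ← mul_assoc, Ring.mul_inverse_cancel _ h, one_mul]

theorem det_eq_of_row_eq_single {t : ℕ} (A : Matrix (Fin (t + 1)) (Fin (t + 1)) R)
    {r c : Fin (t + 1)} (h : A r = Pi.single c 1) :
    A.det = (-1) ^ (r + c : ℕ) * (A.submatrix r.succAbove c.succAbove).det := by
  rw [← adjugate_fin_succ_eq_det_submatrix, adjugate_apply, ← h, updateRow_eq_self]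

theorem det_eq_det_submatrix_orderEmbOfFin {n t : ℕ} (N : Matrix (Fin n) (Fin n) R)
    {K : Finset (Fin n)} (hK : K.card = t) (hN : ∀ k ∉ K, N k = Pi.single k 1) :
    N.det = (N.submatrix (K.orderEmbOfFin hK) (K.orderEmbOfFin hK)).det := by
  have hpiece : N = of (K.piecewise N.row (1 : Matrix (Fin n) (Fin n) R).row) := by
    ext k l
    by_cases hk : k ∈ K
    · simp [Finset.piecewise, hk, row]
    · simp [Finset.piecewise, hk, hN k hk, row, one_apply, Pi.single_apply, eq_comm]
  calc N.det = (N.submatrix ((↑) : K → Fin n) (↑)).det := by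
        rw [← det_piecewise_one_eq_submatrix_det, ← hpiece]
    _ = _ := by
        rw [← det_submatrix_equiv_self (K.orderIsoOfFin hK).toEquiv]
        rfl

theorem det_submatrix_orderEmbOfFin_of_row_eq_single {n t : ℕ} (N : Matrix (Fin n) (Fin n) R)
    {K : Finset (Fin n)} (hK : K.card = t + 1) {x y : Fin n} (hx : x ∈ K) (hy : y ∈ K)
    (hNx : N x = Pi.single y 1) (hx' : (K.erase x).card = t) (hy' : (K.erase y).card = t) :
    (N.submatrix (K.orderEmbOfFin hK) (K.orderEmbOfFin hK)).det =
      (-1) ^ (#{z ∈ K | z < x} + #{z ∈ K | z < y}) *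
        (N.submatrix ((K.erase x).orderEmbOfFin hx') ((K.erase y).orderEmbOfFin hy')).det := by
  obtain ⟨p, rfl⟩ : x ∈ Set.range (K.orderEmbOfFin hK) := by simpa using hx
  obtain ⟨q, rfl⟩ : y ∈ Set.range (K.orderEmbOfFin hK) := by simpa using hy
  have hrow : N.submatrix (K.orderEmbOfFin hK) (K.orderEmbOfFin hK) p = Pi.single q 1 := by
    ext l
    simp [hNx, Pi.single_apply]
  rw [det_eq_of_row_eq_single _ hrow, submatrix_submatrix,
    orderEmbOfFin_comp_succAbove K hK p hx', orderEmbOfFin_comp_succAbove K hK q hy',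
    card_filter_lt_orderEmbOfFin, card_filter_lt_orderEmbOfFin]

end Determinant

section CauchyBinet

variable {R : Type*} [CommRing R] {ι : Type*} [Fintype ι] {k : ℕ}

theorem det_transpose_mul_eq_sum_prod_mul_det [DecidableEq ι] (P Q : Matrix ι (Fin k) R) :
    (Pᵀ * Q).det = ∑ r : Fin k → ι, (∏ a, P (r a) a) * (Q.submatrix r id).det := by
  have hrows : (Pᵀ * Q).row = fun a => ∑ s, P s a • Q.row s := by
    ext a b
    simp [mul_apply, row]
  change (detRowAlternating : (Fin k → R) [⋀^Fin k]→ₗ[R] R) (Pᵀ * Q).row = _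
  rw [hrows, ← AlternatingMap.coe_multilinearMap, MultilinearMap.map_sum]
  refine sum_congr rfl fun r _ => ?_
  rw [MultilinearMap.map_smul_univ, smul_eq_mul]
  rfl

variable [LinearOrder ι]

theorem det_transpose_mul_eq_sum_det_mul_det (P Q : Matrix ι (Fin k) R) :
    (Pᵀ * Q).det = ∑ A : Finset ι, if h : A.card = k then
      (P.submatrix (A.orderEmbOfFin h) id).det * (Q.submatrix (A.orderEmbOfFin h) id).det
    else 0 := by
  rw [det_transpose_mul_eq_sum_prod_mul_det,
    ← sum_fiberwise_of_maps_to (g := fun r => univ.image r) fun _ _ => mem_univ _]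
  refine sum_congr rfl fun A _ => ?_
  split_ifs with hA
  · rw [det_apply', sum_mul]
    symm
    refine sum_bij (fun σ _ => A.orderEmbOfFin hA ∘ σ) ?_ ?_ ?_ ?_
    · intro σ _
      simp only [mem_filter, mem_univ, true_and]
      rw [← image_image, image_univ_equiv, image_orderEmbOfFin_univ]
    · intro σ _ τ _ h
      exact Equiv.ext fun a => (A.orderEmbOfFin hA).injective (congrFun h a)
    · intro r hr
      simp only [mem_filter, mem_univ, true_and] at hr
      have hcard : #(univ.image r) = #(univ : Finset (Fin k)) := by
        rw [hr, hA, card_univ, Fintype.card_fin]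
      have hinj : Function.Injective r := by simpa using card_image_iff.1 hcard
      obtain ⟨σ, hσ⟩ := exists_perm_orderEmbOfFin_comp_eq hinj hA hr
      exact ⟨σ, mem_univ _, hσ⟩
    · intro σ _
      have hsub : Q.submatrix (A.orderEmbOfFin hA ∘ σ) id =
          (Q.submatrix (A.orderEmbOfFin hA) id).submatrix σ id := rfl
      rw [hsub, det_permute]
      simp only [submatrix_apply, Function.comp_apply, id_eq]
      ring
  · refine sum_eq_zero fun r hr => ?_
    simp only [mem_filter, mem_univ, true_and] at hr
    obtain ⟨a, b, hab, hne⟩ := Function.not_injective_iff.1 fun hinj =>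
      hA (by rw [← hr, card_image_of_injective _ hinj, card_univ, Fintype.card_fin])
    rw [det_zero_of_row_eq hne (by ext; simp [hab]), mul_zero]

end CauchyBinet

section Minor

variable {m n : ℕ}

theorem mminor_eq_det (F : Matrix (Fin m) (Fin n) ℝ) {A : Finset (Fin m)} {I : Finset (Fin n)}
    {t : ℕ} (hA : A.card = t) (hI : I.card = t) :
    mminor F A I = (F.submatrix (A.orderEmbOfFin hA) (I.orderEmbOfFin hI)).det := by
  subst hI
  rw [mminor, dif_pos hA]
  rfl

theorem mminor_of_card_ne (F : Matrix (Fin m) (Fin n) ℝ) {A : Finset (Fin m)}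
    {I : Finset (Fin n)} (h : A.card ≠ I.card) : mminor F A I = 0 :=
  dif_neg h

theorem mminor_empty (F : Matrix (Fin m) (Fin n) ℝ) : mminor F ∅ ∅ = 1 := by
  rw [mminor_eq_det F card_empty card_empty, det_fin_zero]

theorem mminor_transpose_mul (P Q : Matrix (Fin m) (Fin n) ℝ) (J I : Finset (Fin n)) :
    mminor (Pᵀ * Q) J I = ∑ A, mminor P A J * mminor Q A I := by
  by_cases hJI : J.card = I.card
  · have hfactor : (Pᵀ * Q).submatrix (J.orderEmbOfFin hJI) (I.orderEmbOfFin rfl) =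
        (P.submatrix id (J.orderEmbOfFin hJI))ᵀ * Q.submatrix id (I.orderEmbOfFin rfl) := by
      ext p q
      simp [mul_apply]
    rw [mminor_eq_det _ hJI rfl, hfactor, det_transpose_mul_eq_sum_det_mul_det]
    refine sum_congr rfl fun A _ => ?_
    split_ifs with hA
    · rw [mminor_eq_det P hA hJI, mminor_eq_det Q hA rfl]
      rfl
    · rw [mminor_of_card_ne Q hA, mul_zero]
  · rw [mminor_of_card_ne _ hJI]
    refine (sum_eq_zero fun A _ => ?_).symm
    by_cases hA : A.card = J.card
    · rw [mminor_of_card_ne Q (hA ▸ hJI), mul_zero]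
    · rw [mminor_of_card_ne P hA, zero_mul]

theorem sum_mminor_transpose_mul_self (F : Matrix (Fin m) (Fin n) ℝ) :
    ∑ I, mminor (Fᵀ * F) I I =
      1 + ∑ A, ∑ I, if A.card = I.card ∧ 1 ≤ A.card then mminor F A I ^ 2 else 0 := by
  have hterm (A : Finset (Fin m)) (I : Finset (Fin n)) : mminor F A I * mminor F A I =
      (if A = ∅ ∧ I = ∅ then 1 else 0) +
        if A.card = I.card ∧ 1 ≤ A.card then mminor F A I ^ 2 else 0 := by
    by_cases hAI : A.card = I.card
    · obtain hA | hA := Nat.eq_zero_or_pos A.card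
      · obtain rfl := card_eq_zero.1 hA
        obtain rfl := card_eq_zero.1 (hAI ▸ hA)
        simp [mminor_empty]
      · have hne : A ≠ ∅ := nonempty_iff_ne_empty.1 (card_pos.1 hA)
        rw [if_neg fun h => hne h.1, if_pos ⟨hAI, hA⟩, zero_add, sq]
    · have hne : ¬(A = ∅ ∧ I = ∅) := fun h => hAI (by simp [h.1, h.2])
      simp [mminor_of_card_ne F hAI, hne, hAI]
  simp_rw [mminor_transpose_mul]
  rw [sum_comm]
  simp_rw [hterm, sum_add_distrib]
  simp [ite_and]

theorem sum_ite_mul_mminor_transpose_mul_self (F : Matrix (Fin m) (Fin n) ℝ)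
    (p : Finset (Fin n) → Prop) [DecidablePred p] (c : Finset (Fin n) → ℝ)
    (J : Finset (Fin n) → Finset (Fin n)) :
    ∑ I, (if p I then c I * mminor (Fᵀ * F) (J I) I else 0) =
      ∑ A, ∑ I,
        if A.card = I.card ∧ p I then c I * mminor F A (J I) * mminor F A I else 0 := by
  rw [sum_comm]
  refine sum_congr rfl fun I _ => ?_
  rw [mminor_transpose_mul, mul_sum]
  split_ifs with hp
  · refine sum_congr rfl fun A _ => ?_
    by_cases hA : A.card = I.card
    · simp [hA, hp, mul_assoc]
    · simp [hA, mminor_of_card_ne F hA]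
  · simp [hp]

end Minor

section OrdIdx

variable {N : ℕ}

theorem ordIdx_eq_card_filter_lt_add_one (A : Finset (Fin N)) (a : Fin N) :
    ordIdx A a = #{x ∈ A | x < a} + 1 := by
  rw [ordIdx, ← card_insert_of_notMem (a := a) (s := {x ∈ A | x < a}) (by simp)]
  congr 1
  ext x
  simp only [mem_filter, mem_insert, le_iff_lt_or_eq]
  grind

theorem ordIdx_erase_self (I : Finset (Fin N)) (a : Fin N) :
    ordIdx (I.erase a) a = ordIdx I a := by
  simp only [ordIdx_eq_card_filter_lt_add_one, filter_erase, lt_irrefl, not_false_eq_true,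
    erase_eq_of_notMem, mem_filter, and_false]

theorem ordIdx_add_ordIdx_erase {I : Finset (Fin N)} {i j : Fin N} (hi : i ∉ I) (hj : j ∈ I) :
    ordIdx I j + ordIdx (I.erase j) i =
      #{x ∈ insert i I | x < j} + #{x ∈ insert i I | x < i} + 1 := by
  have hij : i ≠ j := (ne_of_mem_of_not_mem hj hi).symm
  simp only [ordIdx_eq_card_filter_lt_add_one, filter_insert, lt_irrefl, if_false, filter_erase]
  rcases hij.lt_or_gt with h | h
  · rw [if_pos h, card_insert_of_notMem (by simp [hi]), erase_eq_of_notMem (by simp [h.not_gt])]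
    ring
  · rw [if_neg h.not_gt, card_erase_of_mem (by simp [hj, h])]
    have : 0 < #{x ∈ I | x < i} := card_pos.2 ⟨j, by simp [hj, h]⟩
    omega

end OrdIdx

section Expansion

variable {n : ℕ}

theorem adjugate_one_add_apply_eq_sum {R : Type*} [CommRing R] (G : Matrix (Fin n) (Fin n) R)
    (i j : Fin n) :
    (1 + G).adjugate i j = ∑ S : Finset (Fin n),
      (of (S.piecewise (G.updateRow j 0).row ((1 : Matrix (Fin n) (Fin n) R).updateRow j
        (Pi.single i 1)).row)).det := by
  rw [adjugate_apply, ← det_add_eq_sum_det_piecewise]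
  congr 1
  ext k l
  by_cases hk : k = j
  · simp [hk]
  · simp [hk, add_comm]

theorem det_eq_mminor_of_rows (G N : Matrix (Fin n) (Fin n) ℝ) (S : Finset (Fin n))
    (hS : ∀ k ∈ S, N k = G k) (hSc : ∀ k ∉ S, N k = Pi.single k 1) :
    N.det = mminor G S S := by
  rw [det_eq_det_submatrix_orderEmbOfFin N rfl hSc, mminor_eq_det G rfl rfl]
  congr 1
  ext p q
  simp [hS _ (orderEmbOfFin_mem S rfl p)]

theorem det_eq_neg_mminor_of_rows (G N : Matrix (Fin n) (Fin n) ℝ) {I : Finset (Fin n)}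
    {i j : Fin n} (hi : i ∉ I) (hj : j ∈ I) (hS : ∀ k ∈ insert i (I.erase j), N k = G k)
    (hNj : N j = Pi.single i 1) (hK : ∀ k ∉ insert i I, N k = Pi.single k 1) :
    N.det =
      -((-1) ^ (ordIdx I j + ordIdx (I.erase j) i) * mminor G (insert i (I.erase j)) I) := by
  have hij : i ≠ j := (ne_of_mem_of_not_mem hj hi).symm
  have hKj : (insert i I).erase j = insert i (I.erase j) := erase_insert_of_ne hij
  have hKi : (insert i I).erase i = I := erase_insert hi
  have hKcard : (insert i I).card = I.card + 1 := card_insert_of_notMem hi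
  have hKj' : ((insert i I).erase j).card = I.card := by
    rw [hKj, card_insert_of_notMem (by simp [hi]), card_erase_add_one hj]
  have hKi' : ((insert i I).erase i).card = I.card := by rw [hKi]
  have hrows : N.submatrix (((insert i I).erase j).orderEmbOfFin hKj')
      (((insert i I).erase i).orderEmbOfFin hKi') = G.submatrix
      (((insert i I).erase j).orderEmbOfFin hKj') (((insert i I).erase i).orderEmbOfFin hKi') := by
    ext p q
    have hmem : ((insert i I).erase j).orderEmbOfFin hKj' p ∈ insert i (I.erase j) := by
      rw [← hKj]
      exact orderEmbOfFin_mem _ hKj' p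
    simp only [submatrix_apply, hS _ hmem]
  rw [det_eq_det_submatrix_orderEmbOfFin N hKcard hK,
    det_submatrix_orderEmbOfFin_of_row_eq_single N hKcard (mem_insert_of_mem hj)
      (mem_insert_self i I) hNj hKj' hKi', hrows, ← mminor_eq_det, hKj, hKi,
    ordIdx_add_ordIdx_erase hi hj, pow_succ]
  ring

theorem adjugate_one_add_apply_self (G : Matrix (Fin n) (Fin n) ℝ) (i : Fin n) :
    (1 + G).adjugate i i = ∑ S with i ∉ S, mminor G S S := by
  rw [adjugate_one_add_apply_eq_sum, sum_filter]
  refine sum_congr rfl fun S _ => ?_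
  split_ifs with hiS
  · exact det_eq_zero_of_row_eq_zero i fun l => by simp [Finset.piecewise, hiS, row]
  · refine det_eq_mminor_of_rows G _ S (fun k hk => ?_) (fun k hk => ?_)
    · ext l
      simp [Finset.piecewise, hk, row, ne_of_mem_of_not_mem hk hiS]
    · ext l
      by_cases hki : k = i
      · subst hki; simp [Finset.piecewise, hk, row]
      · simp [Finset.piecewise, hk, hki, row, one_apply, Pi.single_apply, eq_comm]

theorem adjugate_one_add_apply_of_ne (G : Matrix (Fin n) (Fin n) ℝ) {i j : Fin n}
    (hij : i ≠ j) :
    (1 + G).adjugate i j = -∑ I with j ∈ I ∧ i ∉ I,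
      (-1) ^ (ordIdx I j + ordIdx (I.erase j) i) * mminor G (insert i (I.erase j)) I := by
  rw [adjugate_one_add_apply_eq_sum, ← sum_filter_of_ne (p := fun S => i ∈ S ∧ j ∉ S),
    ← sum_neg_distrib]
  · symm
    refine sum_nbij' (fun I => insert i (I.erase j)) (fun S => insert j (S.erase i))
      ?_ ?_ ?_ ?_ fun I hI => ?_
    · intro I hI
      simp_all [hij.symm]
    · intro S hS
      simp_all
    · intro I hI
      simp only [mem_filter] at hI
      simp [erase_insert (fun h => hI.2.2 (mem_of_mem_erase h)), insert_erase hI.2.1]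
    · intro S hS
      simp only [mem_filter] at hS
      simp [erase_insert (fun h => hS.2.2 (mem_of_mem_erase h)), insert_erase hS.2.1]
    · simp only [mem_filter] at hI
      obtain ⟨-, hjI, hiI⟩ := hI
      have hjS : j ∉ insert i (I.erase j) := by simp [hij.symm]
      refine (det_eq_neg_mminor_of_rows G _ hiI hjI (fun k hk => ?_) ?_ fun k hk => ?_).symm <;>
        ext l
      · simp [Finset.piecewise, hk, row, ne_of_mem_of_not_mem hk hjS]
      · simp [Finset.piecewise, hjS, row]
      · have hkj : k ≠ j := fun h => hk (h ▸ mem_insert_of_mem hjI)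
        have hkS : k ∉ insert i (I.erase j) :=
          fun h => hk (insert_subset_insert i (erase_subset j I) h)
        simp [Finset.piecewise, hkS, hkj, row, one_apply, Pi.single_apply, eq_comm]
  · intro S _ hS
    by_contra hcond
    by_cases hjS : j ∈ S
    · exact hS (det_eq_zero_of_row_eq_zero j fun l => by simp [Finset.piecewise, hjS, row])
    · have hiS : i ∉ S := fun hiS => hcond ⟨hiS, hjS⟩
      refine hS (det_zero_of_row_eq hij ?_)
      ext l
      simp [Finset.piecewise, hiS, hjS, hij, row, one_apply, Pi.single_apply, eq_comm]

theorem adjugate_one_add_apply (G : Matrix (Fin n) (Fin n) ℝ) (i j : Fin n) :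
    (1 + G).adjugate i j = (∑ I, mminor G I I) * (if i = j then 1 else 0) -
      ∑ I, if j ∈ I ∧ i ∉ I.erase j then
        (-1) ^ (ordIdx I j + ordIdx (I.erase j) i) * mminor G (insert i (I.erase j)) I
      else 0 := by
  obtain rfl | hij := eq_or_ne i j
  · have hterm : ∀ I : Finset (Fin n), (if i ∈ I ∧ i ∉ I.erase i then
        (-1) ^ (ordIdx I i + ordIdx (I.erase i) i) * mminor G (insert i (I.erase i)) I else 0) =
          if i ∈ I then mminor G I I else 0 := by
      intro I
      by_cases hiI : i ∈ I
      · simp [hiI, insert_erase hiI, ordIdx_erase_self, Even.neg_one_pow ⟨ordIdx I i, rfl⟩]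
      · simp [hiI]
    rw [adjugate_one_add_apply_self, if_pos rfl, mul_one, sum_congr rfl fun I _ => hterm I,
      ← sum_filter, ← sum_filter_add_sum_filter_not univ (i ∈ ·)]
    ring
  · rw [adjugate_one_add_apply_of_ne G hij, if_neg hij, mul_zero, zero_sub, sum_filter]
    simp [hij]

end Expansion

/-- `ξ(F)((I_n+FᵀF)⁻¹)_{ij} = (1 + Σ [F]_{A,I}²)δ_{ij}
− Σ_{A,I : j∈I, i∉I∖{j}} (−1)^{O_I(j)+O_{I∖{j}}(i)} [F]_{A,(I∖{j})∪{i}}[F]_{A,I}`. -/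
theorem xi_mul_inv_entry_eq_minors (m n : ℕ) (F : Matrix (Fin m) (Fin n) ℝ) (i j : Fin n) :
    (1 + Fᵀ * F).det * ((1 : Matrix (Fin n) (Fin n) ℝ) + Fᵀ * F)⁻¹ i j =
      (1 + ∑ A : Finset (Fin m), ∑ I : Finset (Fin n),
          if A.card = I.card ∧ 1 ≤ A.card then (mminor F A I) ^ 2 else 0)
        * (if i = j then (1 : ℝ) else 0)
      - ∑ A : Finset (Fin m), ∑ I : Finset (Fin n),
          if A.card = I.card ∧ j ∈ I ∧ i ∉ I.erase j then
            (-1 : ℝ) ^ (ordIdx I j + ordIdx (I.erase j) i) *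
              mminor F A (insert i (I.erase j)) * mminor F A I
          else 0 := by
  have hpd : (1 + Fᵀ * F).PosDef :=
    PosDef.one.add_posSemidef (by simpa using posSemidef_conjTranspose_mul_self F)
  rw [det_mul_inv_apply hpd.det_pos.ne'.isUnit, adjugate_one_add_apply,
    sum_mminor_transpose_mul_self, sum_ite_mul_mminor_transpose_mul_self]
end

section
/- Let F : ℝ×ℝⁿ → ℝ^{m×n} and D : ℝ×ℝⁿ → ℝᵐ be smooth, set P_i = Σ_α F_{αi} D_α, ξ(F) = det(I_n + FᵀF), h = √(|D|² + |P|² + ξ(F)) > 0, and ξ'(F)_{αi} = ξ(F) Σ_j ((I_n+FᵀF)⁻¹)_{ij} F_{αj}. Assume (F,D) solves: ∂_t F_{αi} + ∂_i((D_α + Σ_j F_{αj}P_j)/h) = 0, ∂_t D_α + ∂_i((D_α P_i + ξ'(F)_{αi})/h) = 0, and ∂_j F_{αi} = ∂_i F_{αj} for all α,i,j (repeated indices summed). Then the energy density h satisfies the conservation law ∂_t h + Σ_i ∂_i P_i = 0. -/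
open Matrix

/-- Time derivative `∂_t f` of a function of `(t,x) ∈ ℝ × ℝⁿ`. -/
noncomputable def pt {n : ℕ} (f : ℝ × (Fin n → ℝ) → ℝ) (p : ℝ × (Fin n → ℝ)) : ℝ :=
  fderiv ℝ f p (1, 0)

/-- Spatial partial derivative `∂_i f` of a function of `(t,x) ∈ ℝ × ℝⁿ`. -/
noncomputable def px {n : ℕ} (i : Fin n) (f : ℝ × (Fin n → ℝ) → ℝ) (p : ℝ × (Fin n → ℝ)) : ℝ :=
  fderiv ℝ f p (0, Pi.single i 1)

/-!
Write `A_α = D_α + F_{αj} P_j` and `B_{αi} = D_α P_i + ξ'_{αi}` (`gradD` and `gradF`). Jacobi's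
formula gives `∂ξ(F) = 2 ξ'(F) : ∂F`, so `A` and `B` are half the gradients of `h²` in `D` and
`F`, and `h ∂h = A · ∂D + B : ∂F` in every direction. The fluxes of the system are `A / h` and
`B / h`; substituting the equations of motion,
`h ∂_t h = -∑_i ∑_α (A_α ∂_i (B_{αi} / h) + B_{αi} ∂_i (A_α / h))`
`        = -h ∑_i ∂_i ∑_α (A_α / h) (B_{αi} / h)`.
Finally `Aᵀ F = Pᵀ (I + FᵀF)` yields the algebraic identity `∑_α A_α B_{αi} = h² P_i`, so the
last sum is `∂_i P_i`.
-/

open Finset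

section Jacobi

variable {κ : Type*} [Fintype κ] [DecidableEq κ] {E : Type*} [NormedAddCommGroup E]
  [NormedSpace ℝ E] {A : E → Matrix κ κ ℝ} {x : E}

theorem det_updateCol_eq_sum_adjugate_mul (M : Matrix κ κ ℝ) (j : κ) (b : κ → ℝ) :
    (M.updateCol j b).det = ∑ i, M.adjugate j i * b i := by
  rw [← cramer_apply, cramer_eq_adjugate_mulVec]; rfl

theorem hasFDerivAt_det {A' : κ → κ → E →L[ℝ] ℝ}
    (hA : ∀ i j, HasFDerivAt (fun y => A y i j) (A' i j) x) :
    HasFDerivAt (fun y => (A y).det) (∑ i, ∑ j, (A x).adjugate j i • A' i j) x := by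
  simp_rw [det_apply']
  refine (HasFDerivAt.fun_sum fun σ _ =>
    (HasFDerivAt.finsetProd fun i _ => hA (σ i) i).const_mul _).congr_fderiv ?_
  ext v
  simp only [_root_.sum_apply, _root_.smul_apply, smul_eq_mul, mul_sum]
  rw [sum_comm]
  conv_rhs => rw [sum_comm]
  -- the terms differentiating column `j` expand `det` of `A x` with that column replaced
  refine sum_congr rfl fun j _ => ?_
  rw [← det_updateCol_eq_sum_adjugate_mul, det_apply']
  refine sum_congr rfl fun σ _ => ?_
  rw [← prod_erase_mul _ _ (mem_univ j), updateCol_self]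
  congr 2
  exact prod_congr rfl fun k hk => (updateCol_ne (ne_of_mem_erase hk)).symm

theorem differentiableAt_det (hA : ∀ i j, DifferentiableAt ℝ (fun y => A y i j) x) :
    DifferentiableAt ℝ (fun y => (A y).det) x :=
  (hasFDerivAt_det fun i j => (hA i j).hasFDerivAt).differentiableAt

theorem fderiv_det_apply (hA : ∀ i j, DifferentiableAt ℝ (fun y => A y i j) x) (v : E) :
    fderiv ℝ (fun y => (A y).det) x v
      = ∑ i, ∑ j, (A x).adjugate j i * fderiv ℝ (fun y => A y i j) x v := by
  simp [(hasFDerivAt_det fun i j => (hA i j).hasFDerivAt).fderiv]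

theorem differentiableAt_adjugate_apply (hA : ∀ i j, DifferentiableAt ℝ (fun y => A y i j) x)
    (i j : κ) : DifferentiableAt ℝ (fun y => (A y).adjugate i j) x := by
  simp only [adjugate_apply]
  refine differentiableAt_det fun r c => ?_
  simp only [updateRow_apply]
  split_ifs
  exacts [differentiableAt_const _, hA r c]

end Jacobi

theorem sum_sum_mul_add_mul_of_isSymm {κ : Type*} [Fintype κ] {S : Matrix κ κ ℝ} (hS : S.IsSymm)
    (f g : κ → ℝ) :
    ∑ i, ∑ j, S j i * (f i * g j + f j * g i) = 2 * ∑ i, (∑ j, S i j * f j) * g i := by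
  have h1 : ∑ i, ∑ j, S j i * (f i * g j) = ∑ i, (∑ j, S i j * f j) * g i := by
    rw [sum_comm]
    exact sum_congr rfl fun i _ => by rw [sum_mul]; exact sum_congr rfl fun j _ => by ring
  have h2 : ∑ i, ∑ j, S j i * (f j * g i) = ∑ i, (∑ j, S i j * f j) * g i :=
    sum_congr rfl fun i _ => by rw [sum_mul]; exact sum_congr rfl fun j _ => by rw [hS.apply]; ring
  simp only [mul_add, sum_add_distrib, h1, h2, two_mul]

theorem add_sum_eq_zero_of_balance {ι κ : Type*} [Fintype ι] [Fintype κ] {e dte : ℝ}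
    {dxP : κ → ℝ} {A dtD : ι → ℝ} {B dtF dxA dxB : ι → κ → ℝ} (he : e ≠ 0)
    (htime : e * dte = ∑ α, A α * dtD α + ∑ α, ∑ i, B α i * dtF α i)
    (hspace : ∀ i, e * dxP i = ∑ α, (A α * dxB α i + B α i * dxA α i))
    (hD : ∀ α, dtD α + ∑ i, dxB α i = 0) (hF : ∀ α i, dtF α i + dxA α i = 0) :
    dte + ∑ i, dxP i = 0 := by
  refine (mul_eq_zero.1 ?_).resolve_left he
  have hD' : ∀ α, dtD α = -∑ i, dxB α i := fun α => eq_neg_of_add_eq_zero_left (hD α)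
  have hF' : ∀ α i, dtF α i = -dxA α i := fun α i => eq_neg_of_add_eq_zero_left (hF α i)
  rw [mul_add, htime, mul_sum, sum_congr rfl fun i _ => hspace i, sum_comm (s := univ (α := κ))]
  simp only [hD', hF', mul_neg, mul_sum, sum_neg_distrib, sum_add_distrib]
  ring

namespace ExtremalSurface

variable {ι κ : Type*} [Fintype ι] {E : Type*} [NormedAddCommGroup E] [NormedSpace ℝ E]

def momentum (F : Matrix ι κ ℝ) (D : ι → ℝ) (i : κ) : ℝ := ∑ α, F α i * D α

theorem one_add_transpose_mul_self_apply [DecidableEq κ] (F : Matrix ι κ ℝ) (i j : κ) :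
    (1 + Fᵀ * F : Matrix κ κ ℝ) i j = (1 : Matrix κ κ ℝ) i j + ∑ α, F α i * F α j := by
  simp [mul_apply]

section Fields

variable {F : E → Matrix ι κ ℝ} {D : E → ι → ℝ} {x : E}

theorem differentiableAt_momentum_apply (hF : ∀ α i, DifferentiableAt ℝ (fun y => F y α i) x)
    (hD : ∀ α, DifferentiableAt ℝ (fun y => D y α) x) (i : κ) :
    DifferentiableAt ℝ (fun y => momentum (F y) (D y) i) x := by
  unfold momentum
  fun_prop

theorem fderiv_momentum_apply (hF : ∀ α i, DifferentiableAt ℝ (fun y => F y α i) x)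
    (hD : ∀ α, DifferentiableAt ℝ (fun y => D y α) x) (i : κ) (v : E) :
    fderiv ℝ (fun y => momentum (F y) (D y) i) x v
      = ∑ α, (F x α i * fderiv ℝ (fun y => D y α) x v
          + D x α * fderiv ℝ (fun y => F y α i) x v) := by
  unfold momentum
  rw [fderiv_fun_sum fun α _ => by fun_prop]
  simp [fderiv_fun_mul (hF _ _) (hD _)]

theorem differentiableAt_one_add_transpose_mul_self_apply [DecidableEq κ]
    (hF : ∀ α i, DifferentiableAt ℝ (fun y => F y α i) x) (i j : κ) :
    DifferentiableAt ℝ (fun y => (1 + (F y)ᵀ * F y : Matrix κ κ ℝ) i j) x := by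
  simp only [one_add_transpose_mul_self_apply]
  fun_prop

theorem fderiv_one_add_transpose_mul_self_apply [DecidableEq κ]
    (hF : ∀ α i, DifferentiableAt ℝ (fun y => F y α i) x) (i j : κ) (v : E) :
    fderiv ℝ (fun y => (1 + (F y)ᵀ * F y : Matrix κ κ ℝ) i j) x v
      = ∑ α, (F x α i * fderiv ℝ (fun y => F y α j) x v
          + F x α j * fderiv ℝ (fun y => F y α i) x v) := by
  simp only [one_add_transpose_mul_self_apply]
  rw [fderiv_const_add, fderiv_fun_sum fun α _ => by fun_prop]
  simp [fderiv_fun_mul (hF _ _) (hF _ _)]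

end Fields

variable [Fintype κ]

def gradD (F : Matrix ι κ ℝ) (D : ι → ℝ) (α : ι) : ℝ := D α + ∑ j, F α j * momentum F D j

theorem sum_gradD_mul (F : Matrix ι κ ℝ) (D : ι → ℝ) :
    ∑ α, gradD F D α * D α = ∑ α, D α ^ 2 + ∑ i, momentum F D i ^ 2 := by
  simp only [gradD, add_mul, sum_add_distrib, sq, sum_mul]
  congr 1
  rw [sum_comm]
  refine sum_congr rfl fun j _ => ?_
  simp only [mul_right_comm _ (momentum F D j), ← sum_mul]
  rfl

variable [DecidableEq κ]

def xi (F : Matrix ι κ ℝ) : ℝ := (1 + Fᵀ * F).det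

noncomputable def xiDeriv (F : Matrix ι κ ℝ) (α : ι) (i : κ) : ℝ :=
  xi F * ∑ j, (1 + Fᵀ * F : Matrix κ κ ℝ)⁻¹ i j * F α j

noncomputable def energy (F : Matrix ι κ ℝ) (D : ι → ℝ) : ℝ :=
  √(∑ α, D α ^ 2 + ∑ i, momentum F D i ^ 2 + xi F)

noncomputable def gradF (F : Matrix ι κ ℝ) (D : ι → ℝ) (α : ι) (i : κ) : ℝ :=
  D α * momentum F D i + xiDeriv F α i

theorem posDef_one_add_transpose_mul_self (F : Matrix ι κ ℝ) : (1 + Fᵀ * F).PosDef :=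
  PosDef.one.add_posSemidef (by simpa using posSemidef_conjTranspose_mul_self F)

theorem xi_pos (F : Matrix ι κ ℝ) : 0 < xi F := (posDef_one_add_transpose_mul_self F).det_pos

theorem energy_sq (F : Matrix ι κ ℝ) (D : ι → ℝ) :
    energy F D ^ 2 = ∑ α, D α ^ 2 + ∑ i, momentum F D i ^ 2 + xi F :=
  Real.sq_sqrt (by positivity [xi_pos F])

theorem energy_pos (F : Matrix ι κ ℝ) (D : ι → ℝ) : 0 < energy F D :=
  Real.sqrt_pos.2 (by positivity [xi_pos F])

theorem xiDeriv_eq_sum_adjugate (F : Matrix ι κ ℝ) (α : ι) (i : κ) :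
    xiDeriv F α i = ∑ j, (1 + Fᵀ * F).adjugate i j * F α j := by
  have hξ : (1 + Fᵀ * F).det ≠ 0 := (xi_pos F).ne'
  simp only [xiDeriv, xi, Matrix.inv_def, Ring.inverse_eq_inv', Matrix.smul_apply, smul_eq_mul,
    mul_sum]
  exact sum_congr rfl fun j _ => by field_simp

theorem gradD_vecMul (F : Matrix ι κ ℝ) (D : ι → ℝ) :
    gradD F D ᵥ* F = (1 + Fᵀ * F) *ᵥ momentum F D := by
  change (D + F *ᵥ momentum F D) ᵥ* F = _
  rw [add_vecMul, ← mulVec_transpose, ← mulVec_transpose, mulVec_mulVec, add_mulVec, one_mulVec]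
  rfl

theorem sum_gradD_mul_inv_mul (F : Matrix ι κ ℝ) (D : ι → ℝ) (i : κ) :
    ∑ α, gradD F D α * ∑ j, (1 + Fᵀ * F : Matrix κ κ ℝ)⁻¹ i j * F α j = momentum F D i := by
  have h := congrFun (congrArg ((1 + Fᵀ * F : Matrix κ κ ℝ)⁻¹ *ᵥ ·) (gradD_vecMul F D)) i
  rw [mulVec_mulVec, nonsing_inv_mul _ (xi_pos F).ne'.isUnit, one_mulVec] at h
  rw [← h]
  simp only [mulVec, dotProduct, vecMul, mul_sum]
  rw [sum_comm]
  exact sum_congr rfl fun j _ => sum_congr rfl fun α _ => by ring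

theorem sum_gradD_mul_gradF (F : Matrix ι κ ℝ) (D : ι → ℝ) (i : κ) :
    ∑ α, gradD F D α * gradF F D α i = energy F D ^ 2 * momentum F D i := by
  calc ∑ α, gradD F D α * gradF F D α i
      = (∑ α, gradD F D α * D α) * momentum F D i
          + xi F * ∑ α, gradD F D α * ∑ j, (1 + Fᵀ * F : Matrix κ κ ℝ)⁻¹ i j * F α j := by
        rw [sum_mul, mul_sum, ← sum_add_distrib]
        exact sum_congr rfl fun α _ => by rw [gradF, xiDeriv]; ring
    _ = energy F D ^ 2 * momentum F D i := by
        rw [sum_gradD_mul, sum_gradD_mul_inv_mul, energy_sq]; ring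

theorem sum_gradD_mul_add_sum_gradF_mul (F : Matrix ι κ ℝ) (D dD : ι → ℝ) (dF : ι → κ → ℝ) :
    ∑ α, gradD F D α * dD α + ∑ α, ∑ i, gradF F D α i * dF α i
      = ∑ α, D α * dD α + ∑ i, momentum F D i * ∑ α, (F α i * dD α + D α * dF α i)
        + ∑ α, ∑ i, xiDeriv F α i * dF α i := by
  simp only [gradD, gradF, add_mul, mul_add, sum_add_distrib, mul_sum, sum_mul]
  rw [sum_comm (s := univ (α := κ)), sum_comm (s := univ (α := κ))]
  simp only [mul_comm, mul_left_comm]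
  ring

section Fields

variable {F : E → Matrix ι κ ℝ} {D : E → ι → ℝ} {x : E}

theorem differentiableAt_xi (hF : ∀ α i, DifferentiableAt ℝ (fun y => F y α i) x) :
    DifferentiableAt ℝ (fun y => xi (F y)) x :=
  differentiableAt_det (differentiableAt_one_add_transpose_mul_self_apply hF)

theorem fderiv_xi_apply (hF : ∀ α i, DifferentiableAt ℝ (fun y => F y α i) x) (v : E) :
    fderiv ℝ (fun y => xi (F y)) x v
      = 2 * ∑ α, ∑ i, xiDeriv (F x) α i * fderiv ℝ (fun y => F y α i) x v := by
  have hS : (1 + (F x)ᵀ * F x).adjugate.IsSymm :=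
    IsSymm.adjugate (by simp [IsSymm, transpose_mul])
  simp only [xi, fderiv_det_apply (differentiableAt_one_add_transpose_mul_self_apply hF),
    fderiv_one_add_transpose_mul_self_apply hF, xiDeriv_eq_sum_adjugate, mul_sum]
  refine ((sum_congr rfl fun i _ => sum_comm).trans sum_comm).trans ?_
  exact sum_congr rfl fun α _ => (sum_sum_mul_add_mul_of_isSymm hS (F x α) _).trans (mul_sum _ _ _)

theorem differentiableAt_xiDeriv_apply (hF : ∀ α i, DifferentiableAt ℝ (fun y => F y α i) x)
    (α : ι) (i : κ) : DifferentiableAt ℝ (fun y => xiDeriv (F y) α i) x := by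
  have := differentiableAt_adjugate_apply (differentiableAt_one_add_transpose_mul_self_apply hF)
  simp only [xiDeriv_eq_sum_adjugate]
  fun_prop

theorem differentiableAt_energy (hF : ∀ α i, DifferentiableAt ℝ (fun y => F y α i) x)
    (hD : ∀ α, DifferentiableAt ℝ (fun y => D y α) x) :
    DifferentiableAt ℝ (fun y => energy (F y) (D y)) x := by
  have := differentiableAt_xi hF
  have := differentiableAt_momentum_apply hF hD
  refine DifferentiableAt.sqrt (by fun_prop) ?_
  rw [← energy_sq]
  exact (pow_pos (energy_pos _ _) 2).ne'

theorem energy_mul_fderiv_energy_apply (hF : ∀ α i, DifferentiableAt ℝ (fun y => F y α i) x)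
    (hD : ∀ α, DifferentiableAt ℝ (fun y => D y α) x) (v : E) :
    energy (F x) (D x) * fderiv ℝ (fun y => energy (F y) (D y)) x v
      = ∑ α, gradD (F x) (D x) α * fderiv ℝ (fun y => D y α) x v
        + ∑ α, ∑ i, gradF (F x) (D x) α i * fderiv ℝ (fun y => F y α i) x v := by
  have := differentiableAt_xi hF
  have := differentiableAt_momentum_apply hF hD
  have := differentiableAt_energy hF hD
  have h : fderiv ℝ (fun y => energy (F y) (D y) ^ 2) x v
      = fderiv ℝ (fun y => ∑ α, D y α ^ 2 + ∑ i, momentum (F y) (D y) i ^ 2 + xi (F y)) x v := by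
    simp only [energy_sq]
  simp (disch := fun_prop) only [fderiv_fun_add, fderiv_fun_sum, fderiv_fun_pow] at h
  simp only [_root_.add_apply, _root_.sum_apply, _root_.smul_apply, smul_eq_mul,
    nsmul_eq_mul, Nat.cast_ofNat, Nat.reduceSub, pow_one, fderiv_xi_apply hF,
    fderiv_momentum_apply hF hD, mul_assoc, ← mul_sum] at h
  rw [sum_gradD_mul_add_sum_gradF_mul]
  linarith

theorem energy_mul_fderiv_momentum_apply (hF : ∀ α i, DifferentiableAt ℝ (fun y => F y α i) x)
    (hD : ∀ α, DifferentiableAt ℝ (fun y => D y α) x) (i : κ) (v : E) :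
    energy (F x) (D x) * fderiv ℝ (fun y => momentum (F y) (D y) i) x v
      = ∑ α, (gradD (F x) (D x) α
            * fderiv ℝ (fun y => gradF (F y) (D y) α i / energy (F y) (D y)) x v
          + gradF (F x) (D x) α i
            * fderiv ℝ (fun y => gradD (F y) (D y) α / energy (F y) (D y)) x v) := by
  have hP : (fun y => momentum (F y) (D y) i) = fun y => ∑ α,
      gradD (F y) (D y) α / energy (F y) (D y) * (gradF (F y) (D y) α i / energy (F y) (D y)) := by
    funext y
    have := (energy_pos (F y) (D y)).ne'
    simp only [div_mul_div_comm, ← sum_div, sum_gradD_mul_gradF]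
    field_simp
  have := differentiableAt_xiDeriv_apply hF
  have := differentiableAt_momentum_apply hF hD
  have := differentiableAt_energy hF hD
  have he := (energy_pos (F x) (D x)).ne'
  have hA : ∀ α, DifferentiableAt ℝ (fun y => gradD (F y) (D y) α / energy (F y) (D y)) x := by
    unfold gradD; fun_prop (disch := exact he)
  have hB : ∀ α, DifferentiableAt ℝ (fun y => gradF (F y) (D y) α i / energy (F y) (D y)) x := by
    unfold gradF; fun_prop (disch := exact he)
  rw [hP, fderiv_fun_sum fun α _ => (hA α).fun_mul (hB α), _root_.sum_apply, mul_sum]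
  refine sum_congr rfl fun α _ => ?_
  rw [fderiv_fun_mul (hA α) (hB α)]
  simp only [_root_.add_apply, _root_.smul_apply, smul_eq_mul]
  field_simp

end Fields

end ExtremalSurface

theorem energy_conservation_general (m n : ℕ)
    (F : ℝ × (Fin n → ℝ) → Matrix (Fin m) (Fin n) ℝ)
    (D : ℝ × (Fin n → ℝ) → Fin m → ℝ)
    (hF : ∀ α i, ContDiff ℝ (⊤ : ℕ∞) fun p => F p α i)
    (hD : ∀ α, ContDiff ℝ (⊤ : ℕ∞) fun p => D p α)
    (P : ℝ × (Fin n → ℝ) → Fin n → ℝ)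
    (hP : P = fun p i => ∑ α, F p α i * D p α)
    (h : ℝ × (Fin n → ℝ) → ℝ)
    (hh : h = fun p =>
      Real.sqrt (∑ α, (D p α) ^ 2 + ∑ i, (P p i) ^ 2 + (1 + (F p)ᵀ * F p).det))
    (xi' : ℝ × (Fin n → ℝ) → Fin m → Fin n → ℝ)
    (hxi' : xi' = fun p α i => (1 + (F p)ᵀ * F p).det *
      ∑ j, ((1 : Matrix (Fin n) (Fin n) ℝ) + (F p)ᵀ * F p)⁻¹ i j * F p α j)
    (heqF : ∀ p (α : Fin m) (i : Fin n),
      pt (fun q => F q α i) p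
        + px i (fun q => (D q α + ∑ j, F q α j * P q j) / h q) p = 0)
    (heqD : ∀ p (α : Fin m),
      pt (fun q => D q α) p
        + ∑ i, px i (fun q => (D q α * P q i + xi' q α i) / h q) p = 0) :
    ∀ p, pt h p + ∑ i, px i (fun q => P q i) p = 0 := by
  subst hP hh hxi'
  intro p
  have hFp : ∀ α i, DifferentiableAt ℝ (fun q => F q α i) p :=
    fun α i => ((hF α i).differentiable (by simp)).differentiableAt
  have hDp : ∀ α, DifferentiableAt ℝ (fun q => D q α) p :=
    fun α => ((hD α).differentiable (by simp)).differentiableAt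
  exact add_sum_eq_zero_of_balance (ExtremalSurface.energy_pos (F p) (D p)).ne'
    (ExtremalSurface.energy_mul_fderiv_energy_apply hFp hDp (1, 0))
    (fun i => ExtremalSurface.energy_mul_fderiv_momentum_apply hFp hDp i (0, Pi.single i 1))
    (heqD p) (heqF p)

/-- Conservation of the energy density: a solution of the extremal-surface system satisfies
`∂_t h + ∇·P = 0`. -/
theorem energy_conservation (m n : ℕ)
    (F : ℝ × (Fin n → ℝ) → Matrix (Fin m) (Fin n) ℝ)
    (D : ℝ × (Fin n → ℝ) → Fin m → ℝ)
    (hF : ∀ α i, ContDiff ℝ (⊤ : ℕ∞) fun p => F p α i)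
    (hD : ∀ α, ContDiff ℝ (⊤ : ℕ∞) fun p => D p α)
    (P : ℝ × (Fin n → ℝ) → Fin n → ℝ)
    (hP : P = fun p i => ∑ α, F p α i * D p α)
    (h : ℝ × (Fin n → ℝ) → ℝ)
    (hh : h = fun p =>
      Real.sqrt (∑ α, (D p α) ^ 2 + ∑ i, (P p i) ^ 2 + (1 + (F p)ᵀ * F p).det))
    (hpos : ∀ p, 0 < h p)
    (xi' : ℝ × (Fin n → ℝ) → Fin m → Fin n → ℝ)
    (hxi' : xi' = fun p α i => (1 + (F p)ᵀ * F p).det *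
      ∑ j, ((1 : Matrix (Fin n) (Fin n) ℝ) + (F p)ᵀ * F p)⁻¹ i j * F p α j)
    (heqF : ∀ p (α : Fin m) (i : Fin n),
      pt (fun q => F q α i) p
        + px i (fun q => (D q α + ∑ j, F q α j * P q j) / h q) p = 0)
    (heqD : ∀ p (α : Fin m),
      pt (fun q => D q α) p
        + ∑ i, px i (fun q => (D q α * P q i + xi' q α i) / h q) p = 0)
    (hcurl : ∀ p (α : Fin m) (i j : Fin n),
      px j (fun q => F q α i) p = px i (fun q => F q α j) p) :
    ∀ p, pt h p + ∑ i, px i (fun q => P q i) p = 0 :=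
  energy_conservation_general m n F D hF hD P hP h hh xi' hxi' heqF heqD
end
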